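/- Let ℰ₁ = {p ∈ ℝ³ : (p − c₁)ᵀ·M₁·(p − c₁) ≤ 1} and ℰ₂ = {p ∈ ℝ³ : (p − c₂)ᵀ·M₂·(p − c₂) ≤ 1} be solid ellipsoids in ℝ³ with M₁, M₂ symmetric positive definite. Let π : ℝ³ → ℝ² be the orthogonal projection onto one of the coordinate planes (x-y, x-z, or y-z), and suppose π(ℰ₁) = {q : (q − c₁′)ᵀ·M₁′·(q − c₁′) ≤ 1} and π(ℰ₂) = {q : (q − c₂′)ᵀ·M₂′·(q − c₂′) ≤ 1} with M₁′, M₂′ symmetric positive definite 2×2 matrices, with homogeneous matrices A₁′, A₂′ ∈ ℝ^{3×3}. If the characteristic polynomial f(λ) = det(λ·A₁′ − A₂′) has two distinct negative real roots, then ℰ₁ ∩ ℰ₂ = ∅, i.e., the three-dimensional ellipsoids are disjoint. -/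

import Mathlib

/-!
If a point lay in both ellipsoids, its projection `q` would lie in both planar ellipses, so for
`t ≤ 0` the quadratic form of `t • A₁′ - A₂′` is nonnegative at `(q, 1)`, while its leading
`2 × 2` block `t • M₁′ - M₂′` is negative definite. Hence `det (t • A₁′ - A₂′) ≥ 0` for all
`t < 0`, so every negative root of this cubic is a local minimum, hence a double root. As its
leading coefficient is `det A₁′ = -det M₁′ ≠ 0`, it cannot have two distinct double roots.
-/

/-- The solid ellipsoid `{p ∈ ℝ³ : (p − c)ᵀ·M·(p − c) ≤ 1}`. -/
def solidEllipsoid (M : Matrix (Fin 3) (Fin 3) ℝ) (c : Fin 3 → ℝ) :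
    Set (Fin 3 → ℝ) :=
  {p | dotProduct (p - c) (M.mulVec (p - c)) ≤ 1}

/-- The solid planar ellipse `{q ∈ ℝ² : (q − c)ᵀ·M·(q − c) ≤ 1}`. -/
def solidEllipse (M : Matrix (Fin 2) (Fin 2) ℝ) (c : Fin 2 → ℝ) :
    Set (Fin 2 → ℝ) :=
  {q | dotProduct (q - c) (M.mulVec (q - c)) ≤ 1}

/-- The homogeneous matrix of the solid planar ellipse
`{q ∈ ℝ² : (q − c)ᵀ·M·(q − c) ≤ 1}`: in block form `[[M, −M·c], [−cᵀ·M, cᵀ·M·c − 1]]`. -/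
def ellipseHomMat (M : Matrix (Fin 2) (Fin 2) ℝ) (c : Fin 2 → ℝ) :
    Matrix (Fin 3) (Fin 3) ℝ :=
  ![![M 0 0, M 0 1, -(M.mulVec c) 0],
    ![M 1 0, M 1 1, -(M.mulVec c) 1],
    ![-(Matrix.vecMul c M) 0, -(Matrix.vecMul c M) 1,
      dotProduct c (M.mulVec c) - 1]]

open Matrix Polynomial

theorem Polynomial.one_lt_rootMultiplicity_of_isLocalMin {p : ℝ[X]} (hp : p ≠ 0) {x : ℝ}
    (hx : p.IsRoot x) (hmin : IsLocalMin (fun t => p.eval t) x) : 1 < p.rootMultiplicity x :=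
  (one_lt_rootMultiplicity_iff_isRoot hp).2
    ⟨hx, by simpa [Polynomial.deriv] using hmin.deriv_eq_zero⟩

theorem Polynomial.four_le_natDegree_of_isLocalMin {p : ℝ[X]} (hp : p ≠ 0) {x y : ℝ} (hxy : x ≠ y)
    (hx : p.IsRoot x) (hy : p.IsRoot y) (hminx : IsLocalMin (fun t => p.eval t) x)
    (hminy : IsLocalMin (fun t => p.eval t) y) : 4 ≤ p.natDegree := by
  have hdvdx : (X - C x) ^ 2 ∣ p := (le_rootMultiplicity_iff hp).1
    (one_lt_rootMultiplicity_of_isLocalMin hp hx hminx)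
  have hdvdy : (X - C y) ^ 2 ∣ p := (le_rootMultiplicity_iff hp).1
    (one_lt_rootMultiplicity_of_isLocalMin hp hy hminy)
  have hcop : IsCoprime ((X - C x) ^ 2) ((X - C y) ^ 2) :=
    (isCoprime_X_sub_C_of_isUnit_sub (sub_ne_zero.2 hxy).isUnit).pow
  have := natDegree_le_of_dvd (hcop.mul_dvd hdvdx hdvdy) hp
  rwa [natDegree_mul (pow_ne_zero _ (X_sub_C_ne_zero x)) (pow_ne_zero _ (X_sub_C_ne_zero y)),
    natDegree_pow, natDegree_pow, natDegree_X_sub_C, natDegree_X_sub_C] at this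

theorem Matrix.eval_det_X_smul_sub {n : Type*} [Fintype n] [DecidableEq n] (A B : Matrix n n ℝ)
    (t : ℝ) :
    (det ((X : ℝ[X]) • A.map C - B.map C)).eval t = (t • A - B).det := by
  rw [← coe_evalRingHom, RingHom.map_det]
  congr 1
  ext i j
  simp only [Matrix.sub_apply, Matrix.smul_apply, Matrix.map_apply, RingHom.mapMatrix_apply,
    coe_evalRingHom, eval_sub, eval_mul, eval_X, eval_C, smul_eq_mul]

theorem Matrix.eq_of_isLocalMin_det_smul_sub {n : Type*} [Fintype n] [DecidableEq n]
    (hn : Fintype.card n < 4) {A B : Matrix n n ℝ} (hA : A.det ≠ 0) {x y : ℝ}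
    (hx : (x • A - B).det = 0) (hy : (y • A - B).det = 0)
    (hminx : IsLocalMin (fun t => (t • A - B).det) x)
    (hminy : IsLocalMin (fun t => (t • A - B).det) y) : x = y := by
  set p : ℝ[X] := det ((X : ℝ[X]) • A.map C + (-B).map C) with hp_def
  have hp : ∀ t, p.eval t = (t • A - B).det := by
    intro t
    rw [hp_def, Matrix.map_neg _ fun _ => C_neg, ← sub_eq_add_neg, eval_det_X_smul_sub]
  have hdeg : p.natDegree ≤ Fintype.card n := natDegree_det_X_add_C_le A (-B)
  have hp0 : p ≠ 0 := fun h => hA <| by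
    rw [← coeff_det_X_add_C_card A (-B), ← hp_def, h, coeff_zero]
  by_contra hxy
  have := four_le_natDegree_of_isLocalMin hp0 hxy (by simpa [IsRoot, hp]) (by simpa [IsRoot, hp])
    (by simpa [hp]) (by simpa [hp])
  omega

/-- Schur complement: with `B` the leading `2 × 2` block, `v := (x, y, 1)` and
`g := B (x, y) + (A 0 2, A 1 2)`, one has `det A = det B * vᵀ A v - gᵀ (adj B) g`,
and `adj B` is negative definite along with `B`. -/
theorem Matrix.det_nonneg_of_neg_posDef_block {A : Matrix (Fin 3) (Fin 3) ℝ}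
    (hA : A.IsSymm) (hB : (-A.submatrix Fin.castSucc Fin.castSucc).PosDef) (x y : ℝ)
    (hv : 0 ≤ ![x, y, 1] ⬝ᵥ A *ᵥ ![x, y, 1]) : 0 ≤ A.det := by
  have h00 : A 0 0 < 0 := by simpa using hB.diag_pos (i := 0)
  have hminor : 0 < A 0 0 * A 1 1 - A 0 1 * A 1 0 := by
    simpa [det_fin_two] using hB.det_pos
  have hsymm : ∀ i j, A j i = A i j := fun i j => by simpa using congrFun (congrFun hA i) j
  rw [det_fin_three]
  simp only [dotProduct, mulVec, Fin.sum_univ_three, cons_val_zero, cons_val_one, cons_val,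
    mul_one, one_mul] at hv
  simp only [hsymm 0 1, hsymm 0 2, hsymm 1 2] at hminor hv ⊢
  set g₀ := A 0 0 * x + A 0 1 * y + A 0 2
  set g₁ := A 0 1 * x + A 1 1 * y + A 1 2
  have hadj : A 1 1 * g₀ ^ 2 - 2 * A 0 1 * g₀ * g₁ + A 0 0 * g₁ ^ 2 ≤ 0 := by
    nlinarith [sq_nonneg (A 0 0 * g₁ - A 0 1 * g₀), mul_nonneg hminor.le (sq_nonneg g₀)]
  nlinarith [mul_nonneg hminor.le hv]

@[simp]
theorem ellipseHomMat_castSucc_castSucc (M : Matrix (Fin 2) (Fin 2) ℝ) (c : Fin 2 → ℝ)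
    (i j : Fin 2) : ellipseHomMat M c i.castSucc j.castSucc = M i j := by
  fin_cases i <;> fin_cases j <;> rfl

theorem ellipseHomMat_isSymm {M : Matrix (Fin 2) (Fin 2) ℝ} (hM : M.IsSymm) (c : Fin 2 → ℝ) :
    (ellipseHomMat M c).IsSymm := by
  have h : M 1 0 = M 0 1 := by simpa using congrFun (congrFun hM 0) 1
  refine IsSymm.ext fun i j => ?_
  fin_cases i <;> fin_cases j <;> simp [ellipseHomMat, mulVec, vecMul, dotProduct, h] <;> ring

theorem det_ellipseHomMat (M : Matrix (Fin 2) (Fin 2) ℝ) (c : Fin 2 → ℝ) :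
    (ellipseHomMat M c).det = -M.det := by
  rw [det_fin_three, det_fin_two]
  simp [ellipseHomMat, mulVec, vecMul, dotProduct]
  ring

theorem dotProduct_ellipseHomMat_mulVec (M : Matrix (Fin 2) (Fin 2) ℝ) (c q : Fin 2 → ℝ) :
    ![q 0, q 1, 1] ⬝ᵥ ellipseHomMat M c *ᵥ ![q 0, q 1, 1] = (q - c) ⬝ᵥ M *ᵥ (q - c) - 1 := by
  simp [ellipseHomMat, mulVec, vecMul, dotProduct, Fin.sum_univ_three]
  ring

theorem det_smul_ellipseHomMat_sub_nonneg {M₁ M₂ : Matrix (Fin 2) (Fin 2) ℝ} (h₁ : M₁.PosDef)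
    (h₂ : M₂.PosDef) {c₁ c₂ q : Fin 2 → ℝ} (hq₁ : q ∈ solidEllipse M₁ c₁)
    (hq₂ : q ∈ solidEllipse M₂ c₂) {t : ℝ} (ht : t ≤ 0) :
    0 ≤ (t • ellipseHomMat M₁ c₁ - ellipseHomMat M₂ c₂).det := by
  have isSymm {M : Matrix (Fin 2) (Fin 2) ℝ} (hM : M.PosDef) : M.IsSymm :=
    (conjTranspose_eq_transpose_of_trivial M).symm.trans hM.isHermitian
  refine det_nonneg_of_neg_posDef_block
    (((ellipseHomMat_isSymm (isSymm h₁) c₁).smul t).sub (ellipseHomMat_isSymm (isSymm h₂) c₂))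
    ?_ (q 0) (q 1) ?_
  · convert h₂.add_posSemidef (h₁.posSemidef.smul (neg_nonneg.2 ht)) using 1
    ext i j
    simp only [Matrix.neg_apply, submatrix_apply, Matrix.sub_apply, Matrix.smul_apply,
      Matrix.add_apply, smul_eq_mul, ellipseHomMat_castSucc_castSucc]
    ring
  · rw [solidEllipse, Set.mem_ofPred_eq] at hq₁ hq₂
    rw [sub_mulVec, smul_mulVec, dotProduct_sub, dotProduct_smul, smul_eq_mul,
      dotProduct_ellipseHomMat_mulVec, dotProduct_ellipseHomMat_mulVec]
    nlinarith [mul_nonneg_of_nonpos_of_nonpos ht (sub_nonpos.2 hq₁), sub_nonneg.2 hq₂]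

theorem ellipsoids_disjoint_of_projection_roots_general
    (M1 M2 : Matrix (Fin 3) (Fin 3) ℝ) (c1 c2 : Fin 3 → ℝ)
    (π : (Fin 3 → ℝ) → (Fin 2 → ℝ))
    (M1' M2' : Matrix (Fin 2) (Fin 2) ℝ) (c1' c2' : Fin 2 → ℝ)
    (hM1' : M1'.PosDef)
    (hM2' : M2'.PosDef)
    (hproj1 : π '' solidEllipsoid M1 c1 = solidEllipse M1' c1')
    (hproj2 : π '' solidEllipsoid M2 c2 = solidEllipse M2' c2')
    (hroots : ∃ l1 l2 : ℝ, l1 < 0 ∧ l2 < 0 ∧ l1 ≠ l2 ∧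
      (l1 • ellipseHomMat M1' c1' - ellipseHomMat M2' c2').det = 0 ∧
      (l2 • ellipseHomMat M1' c1' - ellipseHomMat M2' c2').det = 0) :
    solidEllipsoid M1 c1 ∩ solidEllipsoid M2 c2 = ∅ := by
  obtain ⟨l1, l2, hl1, hl2, hne, hdet1, hdet2⟩ := hroots
  refine Set.eq_empty_of_forall_notMem fun p ⟨hp1, hp2⟩ => hne ?_
  have hq1 : π p ∈ solidEllipse M1' c1' := hproj1 ▸ Set.mem_image_of_mem π hp1
  have hq2 : π p ∈ solidEllipse M2' c2' := hproj2 ▸ Set.mem_image_of_mem π hp2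
  have hmin {l : ℝ} (hl : l < 0)
      (hdet : (l • ellipseHomMat M1' c1' - ellipseHomMat M2' c2').det = 0) :
      IsLocalMin (fun t => (t • ellipseHomMat M1' c1' - ellipseHomMat M2' c2').det) l :=
    IsMinOn.isLocalMin
      (fun t ht => hdet ▸ det_smul_ellipseHomMat_sub_nonneg hM1' hM2' hq1 hq2 (le_of_lt ht))
      (Iio_mem_nhds hl)
  have hA1 : (ellipseHomMat M1' c1').det ≠ 0 := by
    rw [det_ellipseHomMat]
    exact neg_ne_zero.2 hM1'.det_pos.ne'
  exact eq_of_isLocalMin_det_smul_sub (by simp) hA1 hdet1 hdet2 (hmin hl1 hdet1) (hmin hl2 hdet2)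

/-- If the projections of two solid ellipsoids in ℝ³ onto one of the
coordinate planes (x-y, x-z or y-z) are solid planar ellipses whose characteristic
polynomial `f(λ) = det(λ·A₁′ − A₂′)` has two distinct negative real roots, then the
three-dimensional ellipsoids are disjoint. -/
theorem ellipsoids_disjoint_of_projection_roots
    (M1 M2 : Matrix (Fin 3) (Fin 3) ℝ) (c1 c2 : Fin 3 → ℝ)
    (hM1symm : M1.IsSymm) (hM1 : M1.PosDef)
    (hM2symm : M2.IsSymm) (hM2 : M2.PosDef)
    (π : (Fin 3 → ℝ) → (Fin 2 → ℝ))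
    (hπ : π = (fun p => ![p 0, p 1]) ∨ π = (fun p => ![p 0, p 2]) ∨
          π = (fun p => ![p 1, p 2]))
    (M1' M2' : Matrix (Fin 2) (Fin 2) ℝ) (c1' c2' : Fin 2 → ℝ)
    (hM1'symm : M1'.IsSymm) (hM1' : M1'.PosDef)
    (hM2'symm : M2'.IsSymm) (hM2' : M2'.PosDef)
    (hproj1 : π '' solidEllipsoid M1 c1 = solidEllipse M1' c1')
    (hproj2 : π '' solidEllipsoid M2 c2 = solidEllipse M2' c2')
    (hroots : ∃ l1 l2 : ℝ, l1 < 0 ∧ l2 < 0 ∧ l1 ≠ l2 ∧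
      (l1 • ellipseHomMat M1' c1' - ellipseHomMat M2' c2').det = 0 ∧
      (l2 • ellipseHomMat M1' c1' - ellipseHomMat M2' c2').det = 0) :
    solidEllipsoid M1 c1 ∩ solidEllipsoid M2 c2 = ∅ :=
  ellipsoids_disjoint_of_projection_roots_general M1 M2 c1 c2 π M1' M2' c1' c2' hM1' hM2' hproj1
    hproj2 hroots
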